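/- Let f : ℝ^d → ℝ be nonnegative and differentiable with M-Lipschitz gradient (M > 0). Let 0 ≤ α ≤ 1 and let η : ℕ → ℝ satisfy 0 < η(t) and M·η(t) ≤ 1 for every t. Starting from any τ(0) ∈ ℝ^d, define τ(t+1) = τ(t) − η(t)·∇f(τ(t)) + α·η(t)·e(τ(t)), where e(τ) ∈ ℝ^d is the vector with coordinates e(τ)_i = exp(−τ_i). Set γ(t) = η(t)·(1 − α(1 − M·η(t))/2), which is positive. Then for every T ≥ 1: (1/T)·Σ_{t=0}^{T−1} ‖∇f(τ(t))‖² ≤ (1/T)·Σ_{t=0}^{T−1} [ (f(τ(t)) − f(τ(t+1)))/γ(t) + (α·η(t)/(2γ(t)))·(1 − M·η(t)·(1 − α))·‖e(τ(t))‖² + (M²·η(t)²/γ(t))·f(τ(t)) ]. -/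

import Mathlib

open scoped RealInnerProductSpace

section Aux

variable {d : ℕ}

/-- inner with gradient equals fderiv applied. -/
lemma grad_inner (f : EuclideanSpace ℝ (Fin d) → ℝ) (p v : EuclideanSpace ℝ (Fin d)) :
    ⟪gradient f p, v⟫ = fderiv ℝ f p v := by
  simp [gradient, InnerProductSpace.toDual_symm_apply]

/-- Descent lemma for functions with Lipschitz gradient. -/
lemma descent_lemma (f : EuclideanSpace ℝ (Fin d) → ℝ) (M : ℝ) (hM : 0 ≤ M)
    (hdiff : Differentiable ℝ f)
    (hlip : ∀ x y, ‖gradient f x - gradient f y‖ ≤ M * ‖x - y‖)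
    (x y : EuclideanSpace ℝ (Fin d)) :
    f y ≤ f x + ⟪gradient f x, y - x⟫ + M / 2 * ‖y - x‖ ^ 2 := by
  set v := y - x with hv
  set ψ : ℝ → ℝ := fun t => f (x + t • v) - t * ⟪gradient f x, v⟫ - M / 2 * t ^ 2 * ‖v‖ ^ 2
    with hψdef
  have hline : ∀ t : ℝ, HasDerivAt (fun s : ℝ => x + s • v) v t := by
    intro t
    simpa using ((hasDerivAt_id t).smul_const v).const_add x
  have hψ : ∀ t : ℝ, HasDerivAt ψ
      (⟪gradient f (x + t • v), v⟫ - ⟪gradient f x, v⟫ - M * t * ‖v‖ ^ 2) t := by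
    intro t
    have h1 : HasDerivAt (fun s : ℝ => f (x + s • v)) (fderiv ℝ f (x + t • v) v) t :=
      (hdiff (x + t • v)).hasFDerivAt.comp_hasDerivAt t (hline t)
    rw [← grad_inner] at h1
    have h2 : HasDerivAt (fun s : ℝ => s * ⟪gradient f x, v⟫) (⟪gradient f x, v⟫) t := by
      simpa using (hasDerivAt_id t).mul_const (⟪gradient f x, v⟫)
    have h3 : HasDerivAt (fun s : ℝ => M / 2 * s ^ 2 * ‖v‖ ^ 2) (M * t * ‖v‖ ^ 2) t := by
      have := ((hasDerivAt_pow 2 t).const_mul (M / 2)).mul_const (‖v‖ ^ 2)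
      refine this.congr_deriv ?_
      ring
    exact (h1.sub h2).sub h3
  have hmono : AntitoneOn ψ (Set.Icc 0 1) := by
    apply antitoneOn_of_deriv_nonpos (convex_Icc 0 1)
    · exact fun t _ => ((hψ t).continuousAt).continuousWithinAt
    · exact fun t _ => ((hψ t).differentiableAt).differentiableWithinAt
    · intro t ht
      rw [interior_Icc] at ht
      rw [(hψ t).deriv]
      have hb : ⟪gradient f (x + t • v) - gradient f x, v⟫ ≤ M * t * ‖v‖ ^ 2 := by
        calc ⟪gradient f (x + t • v) - gradient f x, v⟫
            ≤ ‖gradient f (x + t • v) - gradient f x‖ * ‖v‖ := real_inner_le_norm _ _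
          _ ≤ (M * ‖(x + t • v) - x‖) * ‖v‖ := by
              exact mul_le_mul_of_nonneg_right (hlip _ _) (norm_nonneg _)
          _ = M * t * ‖v‖ ^ 2 := by
              rw [add_sub_cancel_left, norm_smul, Real.norm_eq_abs,
                abs_of_nonneg ht.1.le]; ring
      rw [inner_sub_left] at hb
      linarith
  have h01 : ψ 1 ≤ ψ 0 := hmono (by norm_num) (by norm_num) zero_le_one
  have hx1 : x + (1 : ℝ) • v = y := by rw [one_smul, hv]; abel
  have hx1' : x + v = y := by rw [hv]; abel
  simp only [hψdef, one_smul, zero_smul, add_zero, one_pow, mul_zero,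
    zero_mul, sub_zero, hx1'] at h01
  nlinarith [h01]

/-- Gradient norm square bound for nonnegative smooth functions. -/
lemma grad_sq_le (f : EuclideanSpace ℝ (Fin d) → ℝ) (M : ℝ) (hM : 0 < M)
    (hf0 : ∀ x, 0 ≤ f x) (hdiff : Differentiable ℝ f)
    (hlip : ∀ x y, ‖gradient f x - gradient f y‖ ≤ M * ‖x - y‖)
    (x : EuclideanSpace ℝ (Fin d)) :
    ‖gradient f x‖ ^ 2 ≤ 2 * M * f x := by
  have h := descent_lemma f M hM.le hdiff hlip x (x - (1 / M) • gradient f x)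
  have h1 : (x - (1 / M) • gradient f x) - x = -((1 / M) • gradient f x) := by abel
  rw [h1] at h
  have h2 : ⟪gradient f x, -((1 / M) • gradient f x)⟫ = -(1 / M) * ‖gradient f x‖ ^ 2 := by
    rw [inner_neg_right, real_inner_smul_right, real_inner_self_eq_norm_sq]; ring
  have h3 : ‖-((1 / M) • gradient f x)‖ ^ 2 = (1 / M) ^ 2 * ‖gradient f x‖ ^ 2 := by
    rw [norm_neg, norm_smul, Real.norm_eq_abs, abs_of_nonneg (by positivity)]; ring
  rw [h2, h3] at h
  have h4 := hf0 (x - (1 / M) • gradient f x)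
  have hMne : M ≠ 0 := hM.ne'
  have hkey : f x + -(1 / M) * ‖gradient f x‖ ^ 2 + M / 2 * ((1 / M) ^ 2 * ‖gradient f x‖ ^ 2)
      = f x - ‖gradient f x‖ ^ 2 / (2 * M) := by
    field_simp; ring
  rw [hkey] at h
  have h5 : ‖gradient f x‖ ^ 2 / (2 * M) ≤ f x := by linarith
  rw [div_le_iff₀ (by positivity)] at h5
  linarith [h5]

end Aux

/-- Deterministic single-objective instance of Theorem 2 of SpaFL: convergence rate of
the regularized threshold update `τ(t+1) = τ(t) - η(t)∇f(τ(t)) + αη(t)·exp(-τ(t))`,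
where `e(τ)ᵢ = exp(-τᵢ)` is the coordinatewise exponential regularizer. -/
theorem spafl_convergence_rate {d : ℕ} (f : EuclideanSpace ℝ (Fin d) → ℝ)
    (M : ℝ) (hM : 0 < M)
    (hf0 : ∀ x, 0 ≤ f x)
    (hdiff : Differentiable ℝ f)
    (hlip : ∀ x y, ‖gradient f x - gradient f y‖ ≤ M * ‖x - y‖)
    (α : ℝ) (hα0 : 0 ≤ α) (hα1 : α ≤ 1)
    (η : ℕ → ℝ) (hη : ∀ t, 0 < η t) (hMη : ∀ t, M * η t ≤ 1)
    (e : EuclideanSpace ℝ (Fin d) → EuclideanSpace ℝ (Fin d))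
    (he : ∀ x i, e x i = Real.exp (-(x i)))
    (τ : ℕ → EuclideanSpace ℝ (Fin d))
    (hτ : ∀ t, τ (t + 1) = τ t - η t • gradient f (τ t) + (α * η t) • e (τ t))
    (γ : ℕ → ℝ) (hγ : ∀ t, γ t = η t * (1 - α * (1 - M * η t) / 2)) :
    (∀ t, 0 < γ t) ∧
    ∀ T : ℕ, 1 ≤ T →
      (1 / (T : ℝ)) * ∑ t ∈ Finset.range T, ‖gradient f (τ t)‖ ^ 2 ≤
        (1 / (T : ℝ)) * ∑ t ∈ Finset.range T,
          ((f (τ t) - f (τ (t + 1))) / γ t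
            + (α * η t / (2 * γ t)) * (1 - M * η t * (1 - α)) * ‖e (τ t)‖ ^ 2
            + (M ^ 2 * η t ^ 2 / γ t) * f (τ t)) := by
  have hγpos : ∀ t, 0 < γ t := by
    intro t
    rw [hγ t]
    have h1 := hη t
    have h2 := hMη t
    have h3 : α * (1 - M * η t) ≤ 1 * (1 - M * η t) :=
      mul_le_mul_of_nonneg_right hα1 (by linarith)
    nlinarith [mul_pos hM h1]
  refine ⟨hγpos, ?_⟩
  have key : ∀ t, ‖gradient f (τ t)‖ ^ 2 ≤
      (f (τ t) - f (τ (t + 1))) / γ t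
        + (α * η t / (2 * γ t)) * (1 - M * η t * (1 - α)) * ‖e (τ t)‖ ^ 2
        + (M ^ 2 * η t ^ 2 / γ t) * f (τ t) := by
    intro t
    set g := gradient f (τ t) with hg
    set E := e (τ t) with hE
    have hdvec : τ (t + 1) - τ t = (-(η t)) • g + (α * η t) • E := by
      rw [hτ t]; rw [neg_smul]; abel
    have hdesc := descent_lemma f M hM.le hdiff hlip (τ t) (τ (t + 1))
    rw [hdvec] at hdesc
    have hinner : ⟪g, (-(η t)) • g + (α * η t) • E⟫
        = -(η t) * ‖g‖ ^ 2 + (α * η t) * ⟪g, E⟫ := by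
      rw [inner_add_right, real_inner_smul_right, real_inner_smul_right,
        real_inner_self_eq_norm_sq]
    have hnorm : ‖(-(η t)) • g + (α * η t) • E‖ ^ 2
        = (η t) ^ 2 * ‖g‖ ^ 2 - 2 * (η t) * (α * η t) * ⟪g, E⟫
          + (α * η t) ^ 2 * ‖E‖ ^ 2 := by
      rw [norm_add_sq_real, real_inner_smul_left, real_inner_smul_right, norm_smul, norm_smul,
        Real.norm_eq_abs, Real.norm_eq_abs, abs_neg, abs_of_pos (hη t),
        abs_of_nonneg (mul_nonneg hα0 (hη t).le)]
      ring
    rw [hinner, hnorm] at hdesc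
    have hB : ‖g‖ ^ 2 ≤ 2 * M * f (τ t) := grad_sq_le f M hM hf0 hdiff hlip (τ t)
    have hC : ⟪g, E⟫ ≤ (‖g‖ ^ 2 + ‖E‖ ^ 2) / 2 := by
      nlinarith [real_inner_le_norm g E, sq_nonneg (‖g‖ - ‖E‖)]
    have hγt := hγpos t
    have hRHS : (f (τ t) - f (τ (t + 1))) / γ t
        + (α * η t / (2 * γ t)) * (1 - M * η t * (1 - α)) * ‖E‖ ^ 2
        + (M ^ 2 * η t ^ 2 / γ t) * f (τ t)
        = (f (τ t) - f (τ (t + 1)) + α * η t / 2 * (1 - M * η t * (1 - α)) * ‖E‖ ^ 2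
            + M ^ 2 * η t ^ 2 * f (τ t)) / γ t := by
      field_simp
    rw [hRHS, le_div_iff₀ hγt]
    have hCfac : 0 ≤ α * η t * (1 - M * η t) * ((‖g‖ ^ 2 + ‖E‖ ^ 2) / 2 - ⟪g, E⟫) := by
      apply mul_nonneg
      · apply mul_nonneg (mul_nonneg hα0 (hη t).le)
        linarith [hMη t]
      · linarith
    have hBfac : 0 ≤ M * η t ^ 2 / 2 * (2 * M * f (τ t) - ‖g‖ ^ 2) := by
      apply mul_nonneg (by positivity)
      linarith
    rw [hγ t]
    nlinarith [hdesc, hCfac, hBfac, hη t, sq_nonneg (η t)]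
  intro T hT
  apply mul_le_mul_of_nonneg_left _ (by positivity)
  exact Finset.sum_le_sum fun t _ => key t
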